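/- If (ρ, u) is a smooth solution with ρ > 0 of the continuity equation ρ_t + (ρu)_x = 0, then for any real α the identity ∂_t(ρ^{2α-3} ρ_x² / 2) + ∂_x(ρ^{2α-3} u ρ_x² / 2) + α ρ^{2α-3} ρ_x² u_x + ρ^{2α-2} ρ_x u_{xx} = 0 holds. -/

import Mathlib

open Real

private lemma slice1 {E : Type*} [NormedAddCommGroup E] [NormedSpace ℝ E]
    {f : ℝ × ℝ → E} (hf : Differentiable ℝ f) (x t : ℝ) :
    HasDerivAt (fun y => f (y, t)) (fderiv ℝ f (x, t) (1, 0)) x := by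
  have h1 : HasDerivAt (fun y : ℝ => (y, t)) ((1 : ℝ), (0 : ℝ)) x :=
    (hasDerivAt_id x).prodMk (hasDerivAt_const x t)
  exact (hf (x, t)).hasFDerivAt.comp_hasDerivAt x h1

private lemma slice2 {E : Type*} [NormedAddCommGroup E] [NormedSpace ℝ E]
    {f : ℝ × ℝ → E} (hf : Differentiable ℝ f) (x t : ℝ) :
    HasDerivAt (fun τ => f (x, τ)) (fderiv ℝ f (x, t) (0, 1)) t := by
  have h1 : HasDerivAt (fun τ : ℝ => (x, τ)) ((0 : ℝ), (1 : ℝ)) t :=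
    (hasDerivAt_const t x).prodMk (hasDerivAt_id t)
  exact (hf (x, t)).hasFDerivAt.comp_hasDerivAt t h1

private lemma slice1_fderiv {f : ℝ × ℝ → ℝ} (hf : ContDiff ℝ (⊤ : ℕ∞) f) (v : ℝ × ℝ) (x t : ℝ) :
    HasDerivAt (fun y => fderiv ℝ f (y, t) v)
      (fderiv ℝ (fderiv ℝ f) (x, t) (1, 0) v) x := by
  have hd : Differentiable ℝ (fderiv ℝ f) :=
    (hf.fderiv_right (m := 1) ((by exact WithTop.coe_le_coe.mpr le_top))).differentiable one_ne_zero
  have := (slice1 hd x t).clm_apply (hasDerivAt_const x v)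
  simpa using this

private lemma slice2_fderiv {f : ℝ × ℝ → ℝ} (hf : ContDiff ℝ (⊤ : ℕ∞) f) (v : ℝ × ℝ) (x t : ℝ) :
    HasDerivAt (fun τ => fderiv ℝ f (x, τ) v)
      (fderiv ℝ (fderiv ℝ f) (x, t) (0, 1) v) t := by
  have hd : Differentiable ℝ (fderiv ℝ f) :=
    (hf.fderiv_right (m := 1) ((by exact WithTop.coe_le_coe.mpr le_top))).differentiable one_ne_zero
  have := (slice2 hd x t).clm_apply (hasDerivAt_const t v)
  simpa using this

/-- If `(ρ, u)` is a smooth positive solution of the continuity equation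
`ρ_t + (ρu)_x = 0`, then
`∂ₜ(ρ^{2α-3} ρ_x²/2) + ∂ₓ(ρ^{2α-3} u ρ_x²/2) + α ρ^{2α-3} ρ_x² u_x + ρ^{2α-2} ρ_x u_{xx} = 0`. -/
theorem stmt4 (α : ℝ)
    (ρ u : ℝ → ℝ → ℝ)
    (hρ : ContDiff ℝ (⊤ : ℕ∞) (fun p : ℝ × ℝ => ρ p.1 p.2))
    (hu : ContDiff ℝ (⊤ : ℕ∞) (fun p : ℝ × ℝ => u p.1 p.2))
    (hpos : ∀ x t, 0 < ρ x t)
    (mass : ∀ x t, deriv (fun τ => ρ x τ) t + deriv (fun y => ρ y t * u y t) x = 0) :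
    ∀ x t,
      deriv (fun τ => (ρ x τ) ^ (2 * α - 3) * (deriv (fun y => ρ y τ) x) ^ 2 / 2) t
        + deriv (fun y =>
            (ρ y t) ^ (2 * α - 3) * u y t * (deriv (fun z => ρ z t) y) ^ 2 / 2) x
        + α * (ρ x t) ^ (2 * α - 3) * (deriv (fun y => ρ y t) x) ^ 2
            * deriv (fun y => u y t) x
        + (ρ x t) ^ (2 * α - 2) * deriv (fun y => ρ y t) x
            * deriv (deriv (fun y => u y t)) x = 0 := by
  intro x t
  set F : ℝ × ℝ → ℝ := fun p => ρ p.1 p.2 with hFdef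
  set U : ℝ × ℝ → ℝ := fun p => u p.1 p.2 with hUdef
  have hFd : Differentiable ℝ F := hρ.differentiable (by simp)
  have hUd : Differentiable ℝ U := hu.differentiable (by simp)
  -- first partial derivatives as jointly smooth functions
  set G : ℝ × ℝ → ℝ := fun p => fderiv ℝ F p (1, 0) with hGdef
  set Gt : ℝ × ℝ → ℝ := fun p => fderiv ℝ F p (0, 1) with hGtdef
  set V : ℝ × ℝ → ℝ := fun p => fderiv ℝ U p (1, 0) with hVdef
  -- basic derivative facts
  have hρx : ∀ y s, HasDerivAt (fun z => ρ z s) (G (y, s)) y := fun y s => slice1 hFd y s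
  have hρt : ∀ y s, HasDerivAt (fun τ => ρ y τ) (Gt (y, s)) s := fun y s => slice2 hFd y s
  have hux : ∀ y s, HasDerivAt (fun z => u z s) (V (y, s)) y := fun y s => slice1 hUd y s
  -- the continuity equation in pointwise form
  have hmass : ∀ y s, Gt (y, s) = -(G (y, s) * u y s + ρ y s * V (y, s)) := by
    intro y s
    have h1 := (hρt y s).deriv
    have h2 : deriv (fun z => ρ z s * u z s) y = G (y, s) * u y s + ρ y s * V (y, s) :=
      ((hρx y s).mul (hux y s)).deriv
    have := mass y s
    rw [h1, h2] at this
    linarith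
  -- names for point values
  set r := ρ x t with hr
  set rx := G (x, t) with hrx
  set ux := V (x, t) with huxv
  set rxx := fderiv ℝ (fderiv ℝ F) (x, t) (1, 0) (1, 0) with hrxx
  set uxx := fderiv ℝ (fderiv ℝ U) (x, t) (1, 0) (1, 0) with huxx
  set rxt := fderiv ℝ (fderiv ℝ F) (x, t) (0, 1) (1, 0) with hrxt
  have hGx : HasDerivAt (fun y => G (y, t)) rxx x := slice1_fderiv hρ (1, 0) x t
  have hGτ : HasDerivAt (fun τ => G (x, τ)) rxt t := slice2_fderiv hρ (1, 0) x t
  have hVx : HasDerivAt (fun y => V (y, t)) uxx x := slice1_fderiv hu (1, 0) x t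
  have hGtx : HasDerivAt (fun y => Gt (y, t)) (fderiv ℝ (fderiv ℝ F) (x, t) (1, 0) (0, 1)) x :=
    slice1_fderiv hρ (0, 1) x t
  -- symmetry of second derivatives
  have hsym : rxt = fderiv ℝ (fderiv ℝ F) (x, t) (1, 0) (0, 1) :=
    (hρ.contDiffAt.isSymmSndFDerivAt (by simp; exact WithTop.coe_le_coe.mpr (le_top : (2 : ℕ∞) ≤ ⊤))).eq (0, 1) (1, 0)
  -- compute rxt by differentiating the continuity equation in x
  have hRHS : HasDerivAt (fun y => -(G (y, t) * u y t + ρ y t * V (y, t)))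
      (-((rxx * u x t + rx * ux) + (rx * ux + r * uxx))) x :=
    ((hGx.mul (hux x t)).add ((hρx x t).mul hVx)).neg
  have hrxt_eq : rxt = -((rxx * u x t + rx * ux) + (rx * ux + r * uxx)) := by
    rw [hsym]
    have hfun : (fun y => Gt (y, t)) = fun y => -(G (y, t) * u y t + ρ y t * V (y, t)) :=
      funext fun y => hmass y t
    rw [← hGtx.deriv, hfun, hRHS.deriv]
  have hrt_eq : Gt (x, t) = -(rx * u x t + r * ux) := hmass x t
  have hrne : r ≠ 0 := (hpos x t).ne'
  -- Term 1: the time derivative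
  have e1 : (fun τ => (ρ x τ) ^ (2 * α - 3) * (deriv (fun y => ρ y τ) x) ^ 2 / 2)
      = fun τ => (ρ x τ) ^ (2 * α - 3) * (G (x, τ)) ^ 2 / 2 :=
    funext fun τ => by rw [(hρx x τ).deriv]
  have h1 : HasDerivAt (fun τ => (ρ x τ) ^ (2 * α - 3) * (G (x, τ)) ^ 2 / 2)
      ((Gt (x, t) * (2 * α - 3) * r ^ (2 * α - 3 - 1) * (G (x, t)) ^ 2
        + r ^ (2 * α - 3) * ((2 : ℝ) * (G (x, t)) ^ 1 * rxt)) / 2) t := by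
    exact (((hρt x t).rpow_const (Or.inl hrne)).mul (hGτ.pow 2)).div_const 2
  -- Term 2: the space derivative
  have e2 : (fun y => (ρ y t) ^ (2 * α - 3) * u y t * (deriv (fun z => ρ z t) y) ^ 2 / 2)
      = fun y => (ρ y t) ^ (2 * α - 3) * u y t * (G (y, t)) ^ 2 / 2 :=
    funext fun y => by rw [(hρx y t).deriv]
  have h2 : HasDerivAt (fun y => (ρ y t) ^ (2 * α - 3) * u y t * (G (y, t)) ^ 2 / 2)
      (((G (x, t) * (2 * α - 3) * r ^ (2 * α - 3 - 1) * u x t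
          + r ^ (2 * α - 3) * V (x, t)) * (G (x, t)) ^ 2
        + r ^ (2 * α - 3) * u x t * ((2 : ℝ) * (G (x, t)) ^ 1 * rxx)) / 2) x := by
    exact ((((hρx x t).rpow_const (Or.inl hrne)).mul (hux x t)).mul (hGx.pow 2)).div_const 2
  -- second x-derivative of u
  have e3 : deriv (fun y => u y t) = fun y => V (y, t) := funext fun y => (hux y t).deriv
  -- rewrite the goal
  rw [e1, h1.deriv, e2, h2.deriv, (hρx x t).deriv, (hux x t).deriv, e3, hVx.deriv]
  -- rpow algebra
  set s := r ^ (2 * α - 4) with hs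
  have k0 : (2 : ℝ) * α - 3 - 1 = 2 * α - 4 := by ring
  have k1 : r ^ (2 * α - 3) = s * r := by
    calc r ^ (2 * α - 3) = r ^ (2 * α - 4 + 1) := by rw [show 2 * α - 4 + 1 = 2 * α - 3 by ring]
    _ = r ^ (2 * α - 4) * r ^ (1 : ℝ) := Real.rpow_add (hpos x t) _ _
    _ = s * r := by rw [Real.rpow_one, hs]
  have k2 : r ^ (2 * α - 2) = s * r * r := by
    calc r ^ (2 * α - 2) = r ^ (2 * α - 4 + 1 + 1) := by rw [show 2 * α - 4 + 1 + 1 = 2 * α - 2 by ring]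
    _ = r ^ (2 * α - 4 + 1) * r ^ (1 : ℝ) := Real.rpow_add (hpos x t) _ _
    _ = r ^ (2 * α - 4) * r ^ (1 : ℝ) * r ^ (1 : ℝ) := by rw [Real.rpow_add (hpos x t)]
    _ = s * r * r := by rw [Real.rpow_one, hs]
  rw [k0, hrt_eq, hrxt_eq, k1, k2, ← hrx, ← huxv, ← hs]
  ring
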